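/- As an identity of formal power series in a and q: ∑_{m,k≥0} (-a)^m q^{(m-k)^2+k^2+k} / (aq^2;q^2)_m · qbinom(m, 2k) = ∑_{n≥0} (-a)^n q^{n^2}, where qbinom(m, 2k) = [m choose 2k]_q is zero when 2k > m. -/

import Mathlib

/-!
Compare coefficients of `a ^ e`. The inner sum `∑_k q^((m-k)^2+k^2+k) [m, 2k]_q` is half the sum
of the q-binomial expansions of `∏_{i<m} (q^m ± q^(i+1))`; the product with the minus sign
vanishes, so for `m = j + 1` the inner sum is `q^C(j+2,2) (-q; q)_j`. Expanding
`1 / (a q^2; q^2)_(j+1)` by the q-binomial series, the coefficient of `a ^ (n+1)` becomes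
`-q^(2n+1) G(n)` with `G(n) = ∑_j (-1)^j q^C(j,2) (-q; q)_j [n, j]_(q^2)`, and
`G(n+1) = -q^(2n+1) G(n)` because the partial sums of `G(n+1) + q^(2n+1) G(n)` telescope.
-/

open PowerSeries Finset

/-- The q-Pochhammer symbol `(a; q)_n = ∏_{j=0}^{n-1} (1 - a q^j)` in `ℤ[[q]]`. -/
noncomputable def qPoch (a : PowerSeries ℤ) (n : ℕ) : PowerSeries ℤ :=
  ∏ j ∈ Finset.range n, (1 - a * PowerSeries.X ^ j)

/-- The Gaussian binomial coefficient `[m choose r]_q = (q;q)_m / ((q;q)_r (q;q)_{m-r})`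
as an element of `ℤ[[q]]` (zero when `r > m`). -/
noncomputable def gaussBinom (m r : ℕ) : PowerSeries ℤ :=
  if r ≤ m then
    qPoch PowerSeries.X m *
      Ring.inverse (qPoch PowerSeries.X r * qPoch PowerSeries.X (m - r))
  else 0

/-- We work in `ℤ[[q]][[a]]`, with `a` the outer variable and `q` the inner one. -/
noncomputable abbrev Aq : Type := PowerSeries (PowerSeries ℤ)

/-- `(a q^2; q^2)_m = ∏_{j=0}^{m-1} (1 - a q^{2j+2})` as an element of `ℤ[[q]][[a]]`. -/
noncomputable def pochA (m : ℕ) : Aq :=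
  ∏ j ∈ Finset.range m,
    (1 - PowerSeries.X * PowerSeries.C (R := PowerSeries ℤ) (PowerSeries.X ^ (2 * j + 2)))

section QBinom

variable {A : Type*} [CommRing A]

def qBinom (v : A) : ℕ → ℕ → A
  | _, 0 => 1
  | 0, _ + 1 => 0
  | n + 1, k + 1 => qBinom v n k + v ^ (k + 1) * qBinom v n (k + 1)

@[simp] lemma qBinom_zero_right (v : A) (n : ℕ) : qBinom v n 0 = 1 := by
  cases n <;> rfl

lemma qBinom_succ_succ (v : A) (n k : ℕ) :
    qBinom v (n + 1) (k + 1) = qBinom v n k + v ^ (k + 1) * qBinom v n (k + 1) := rfl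

lemma qBinom_eq_zero_of_lt (v : A) : ∀ {n k : ℕ}, n < k → qBinom v n k = 0
  | 0, _ + 1, _ => rfl
  | n + 1, k + 1, h => by
    rw [qBinom_succ_succ, qBinom_eq_zero_of_lt v (by omega : n < k),
      qBinom_eq_zero_of_lt v (by omega : n < k + 1), mul_zero, add_zero]

@[simp] lemma qBinom_self (v : A) : ∀ n : ℕ, qBinom v n n = 1
  | 0 => rfl
  | n + 1 => by
    rw [qBinom_succ_succ, qBinom_self v n, qBinom_eq_zero_of_lt v n.lt_succ_self, mul_zero,
      add_zero]

lemma qBinom_succ_succ' (v : A) : ∀ k d : ℕ,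
    qBinom v (k + d + 1) (k + 1) = v ^ d * qBinom v (k + d) k + qBinom v (k + d) (k + 1)
  | k, 0 => by simp [qBinom_eq_zero_of_lt]
  | 0, d + 1 => by
    have ih := qBinom_succ_succ' v 0 d
    have h₁ : qBinom v (d + 2) 1 = 1 + v * qBinom v (d + 1) 1 := by simp [qBinom_succ_succ]
    have h₂ : qBinom v (d + 1) 1 = 1 + v * qBinom v d 1 := by simp [qBinom_succ_succ]
    simp only [zero_add, qBinom_zero_right] at ih ⊢
    linear_combination h₁ - h₂ + v * ih
  | k + 1, d + 1 => by
    have ih₁ : qBinom v (k + d + 2) (k + 1) =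
        v ^ (d + 1) * qBinom v (k + d + 1) k + qBinom v (k + d + 1) (k + 1) :=
      qBinom_succ_succ' v k (d + 1)
    have ih₂ : qBinom v (k + d + 2) (k + 2) =
        v ^ d * qBinom v (k + d + 1) (k + 1) + qBinom v (k + d + 1) (k + 2) := by
      simpa only [add_right_comm] using qBinom_succ_succ' v (k + 1) d
    have h₁ : qBinom v (k + d + 3) (k + 2) =
        qBinom v (k + d + 2) (k + 1) + v ^ (k + 2) * qBinom v (k + d + 2) (k + 2) :=
      qBinom_succ_succ v (k + d + 2) (k + 1)
    have h₂ : qBinom v (k + d + 2) (k + 1) =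
        qBinom v (k + d + 1) k + v ^ (k + 1) * qBinom v (k + d + 1) (k + 1) :=
      qBinom_succ_succ v (k + d + 1) k
    have h₃ : qBinom v (k + d + 2) (k + 2) =
        qBinom v (k + d + 1) (k + 1) + v ^ (k + 2) * qBinom v (k + d + 1) (k + 2) :=
      qBinom_succ_succ v (k + d + 1) (k + 1)
    rw [show k + 1 + (d + 1) + 1 = k + d + 3 by omega, show k + 1 + (d + 1) = k + d + 2 by omega]
    linear_combination h₁ + ih₁ + v ^ (k + 2) * ih₂ - v ^ (d + 1) * h₂ - h₃

lemma one_sub_pow_mul_qBinom_succ (v : A) (k d : ℕ) :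
    (1 - v ^ (k + 1)) * qBinom v (k + d) (k + 1) = (1 - v ^ d) * qBinom v (k + d) k := by
  linear_combination qBinom_succ_succ v (k + d) k - qBinom_succ_succ' v k d

def qPochhammer (x v : A) (m : ℕ) : A := ∏ j ∈ range m, (1 - x * v ^ j)

@[simp] lemma qPochhammer_zero (x v : A) : qPochhammer x v 0 = 1 := prod_range_zero _

lemma qPochhammer_succ (x v : A) (m : ℕ) :
    qPochhammer x v (m + 1) = qPochhammer x v m * (1 - x * v ^ m) := prod_range_succ _ _

lemma qPochhammer_succ' (x v : A) (m : ℕ) :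
    qPochhammer x v (m + 1) = (1 - x) * qPochhammer (x * v) v m := by
  simp only [qPochhammer, prod_range_succ', pow_succ, pow_zero, mul_one, mul_assoc, mul_comm]

lemma qBinom_mul_qPochhammer_mul_qPochhammer (v : A) : ∀ k d : ℕ,
    qBinom v (k + d) k * qPochhammer v v k * qPochhammer v v d = qPochhammer v v (k + d)
  | 0, d => by simp
  | k + 1, d => by
    have ih := qBinom_mul_qPochhammer_mul_qPochhammer v k (d + 1)
    have h := one_sub_pow_mul_qBinom_succ v k (d + 1)
    rw [← add_assoc] at ih h
    rw [add_right_comm, qPochhammer_succ]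
    rw [qPochhammer_succ] at ih
    linear_combination qPochhammer v v k * qPochhammer v v d * h + ih

lemma choose_two_succ (r : ℕ) : (r + 1).choose 2 = r.choose 2 + r := by
  rw [Nat.choose_succ_succ, Nat.choose_one_right, add_comm]

theorem prod_add_mul_pow_eq_sum_qBinom (v : A) : ∀ (m : ℕ) (x y : A),
    ∏ i ∈ range m, (y + x * v ^ i) =
      ∑ p ∈ antidiagonal m, v ^ p.1.choose 2 * qBinom v m p.1 * x ^ p.1 * y ^ p.2
  | 0, x, y => by simp
  | m + 1, x, y => by
    set a : ℕ × ℕ → A := fun p =>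
      v ^ (p.1.choose 2 + p.1) * qBinom v m p.1 * x ^ p.1 * y ^ p.2
    have ih : ∏ i ∈ range m, (y + x * v ^ (i + 1)) = ∑ p ∈ antidiagonal m, a p := by
      calc ∏ i ∈ range m, (y + x * v ^ (i + 1)) = ∏ i ∈ range m, (y + x * v * v ^ i) :=
            prod_congr rfl fun i _ => by ring
        _ = ∑ p ∈ antidiagonal m, a p := by
            rw [prod_add_mul_pow_eq_sum_qBinom v m (x * v) y]
            exact sum_congr rfl fun p _ => by simp only [a]; ring
    -- expand `∑ a` over `antidiagonal (m + 1)` by peeling either coordinate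
    have hy : y * ∑ p ∈ antidiagonal m, a p = y ^ (m + 1) +
        ∑ p ∈ antidiagonal m, v ^ (p.1 + 1).choose 2 * (v ^ (p.1 + 1) * qBinom v m (p.1 + 1)) *
          x ^ (p.1 + 1) * y ^ p.2 := by
      have h :=
        (Nat.sum_antidiagonal_succ (n := m) (f := a)).symm.trans Nat.sum_antidiagonal_succ'
      simp only [a, qBinom_eq_zero_of_lt v m.lt_succ_self] at h
      simpa [a, mul_sum, pow_add, pow_succ, mul_comm, mul_left_comm, mul_assoc] using h.symm
    have hx : x * ∑ p ∈ antidiagonal m, a p = ∑ p ∈ antidiagonal m,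
        v ^ (p.1 + 1).choose 2 * qBinom v m p.1 * x ^ (p.1 + 1) * y ^ p.2 := by
      simp only [a, mul_sum, choose_two_succ]
      exact sum_congr rfl fun p _ => by ring
    rw [prod_range_succ', ih, Nat.sum_antidiagonal_succ]
    simp only [qBinom_succ_succ, mul_add, add_mul, sum_add_distrib, pow_zero, mul_one,
      Nat.choose_zero_succ, qBinom_zero_right, one_mul]
    linear_combination hx + hy

lemma sum_range_two_mul_one_add_neg_one_pow_mul (g : ℕ → A) : ∀ N : ℕ,
    ∑ r ∈ range (2 * N), (1 + (-1) ^ r) * g r = 2 * ∑ k ∈ range N, g (2 * k)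
  | 0 => by simp
  | N + 1 => by
    rw [show 2 * (N + 1) = 2 * N + 1 + 1 by ring, sum_range_succ, sum_range_succ,
      sum_range_two_mul_one_add_neg_one_pow_mul g N, sum_range_succ, pow_succ, pow_mul,
      neg_one_sq, one_pow]
    ring

lemma choose_two_add_add_mul_sub {k m : ℕ} (h : 2 * k ≤ m) :
    (2 * k).choose 2 + 2 * k + m * (m - 2 * k) = (m - k) ^ 2 + k ^ 2 + k := by
  obtain ⟨d, rfl⟩ := Nat.exists_eq_add_of_le h
  rw [Nat.choose_two_right, show 2 * k + d - k = k + d by omega, Nat.add_sub_cancel_left,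
    mul_assoc, Nat.mul_div_cancel_left _ two_pos]
  rcases k with _ | k
  · simp [sq]
  · rw [show 2 * (k + 1) - 1 = 2 * k + 1 by omega]
    ring

lemma sum_range_add_one : ∀ n : ℕ, ∑ i ∈ range n, (i + 1) = (n + 1).choose 2
  | 0 => rfl
  | n + 1 => by rw [sum_range_succ, sum_range_add_one n, choose_two_succ (n + 1)]

lemma two_mul_sum_pow_mul_qBinom_two_mul (v : A) {m N : ℕ} (h : m < 2 * N) :
    2 * ∑ k ∈ range N, v ^ ((m - k) ^ 2 + k ^ 2 + k) * qBinom v m (2 * k) =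
      ∏ i ∈ range m, (v ^ m + v * v ^ i) + ∏ i ∈ range m, (v ^ m + -v * v ^ i) := by
  set g : ℕ → A := fun r => v ^ (r.choose 2 + r + m * (m - r)) * qBinom v m r
  have hg : ∀ k, g (2 * k) = v ^ ((m - k) ^ 2 + k ^ 2 + k) * qBinom v m (2 * k) := by
    intro k
    rcases le_or_gt (2 * k) m with hk | hk
    · simp only [g, choose_two_add_add_mul_sub hk]
    · simp only [g, qBinom_eq_zero_of_lt v hk, mul_zero]
  have hsub : ∑ r ∈ range (m + 1), (1 + (-1) ^ r) * g r =
      ∑ r ∈ range (2 * N), (1 + (-1) ^ r) * g r := by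
    refine sum_subset (range_subset_range.mpr (by omega)) fun r _ hr => ?_
    simp [g, qBinom_eq_zero_of_lt v (show m < r by simpa using hr)]
  rw [← sum_congr rfl fun k _ => hg k, ← sum_range_two_mul_one_add_neg_one_pow_mul, ← hsub,
    prod_add_mul_pow_eq_sum_qBinom, prod_add_mul_pow_eq_sum_qBinom,
    ← sum_add_distrib, Nat.sum_antidiagonal_eq_sum_range_succ_mk]
  refine sum_congr rfl fun r _ => ?_
  dsimp only [g]
  rw [neg_pow, pow_add, pow_add, pow_mul]
  ring

lemma sum_pow_mul_qBinom_two_mul [IsDomain A] (v : A) (h2 : (2 : A) ≠ 0) {j N : ℕ}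
    (h : j + 1 < 2 * N) :
    ∑ k ∈ range N, v ^ ((j + 1 - k) ^ 2 + k ^ 2 + k) * qBinom v (j + 1) (2 * k) =
      v ^ (j + 2).choose 2 * qPochhammer (-v) v j := by
  have hplus : ∏ i ∈ range (j + 1), (v ^ (j + 1) + v * v ^ i) =
      v ^ (j + 2).choose 2 * (2 * qPochhammer (-v) v j) := by
    calc ∏ i ∈ range (j + 1), (v ^ (j + 1) + v * v ^ i)
        = ∏ i ∈ range (j + 1), v ^ (i + 1) * (1 + v ^ (j - i)) :=
          prod_congr rfl fun i hi => by
            rw [mul_add, mul_one, ← pow_add, show i + 1 + (j - i) = j + 1 by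
              rw [mem_range] at hi; omega, pow_succ']
            ring
      _ = v ^ (j + 2).choose 2 * ∏ i ∈ range (j + 1), (1 + v ^ i) := by
          rw [prod_mul_distrib, prod_pow_eq_pow_sum, sum_range_add_one,
            ← prod_range_reflect (fun i => 1 + v ^ i)]
          simp
      _ = v ^ (j + 2).choose 2 * (2 * qPochhammer (-v) v j) := by
          have h : ∏ i ∈ range (j + 1), (1 + v ^ i) = qPochhammer (-1) v (j + 1) := by
            simp [qPochhammer]
          rw [h, qPochhammer_succ', neg_one_mul, sub_neg_eq_add, one_add_one_eq_two]
  have hminus : ∏ i ∈ range (j + 1), (v ^ (j + 1) + -v * v ^ i) = 0 :=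
    prod_eq_zero (self_mem_range_succ j) (by ring)
  apply mul_left_cancel₀ h2
  rw [two_mul_sum_pow_mul_qBinom_two_mul v h, hplus, hminus]
  ring

def andrewsSummand (v : A) (n j : ℕ) : A :=
  (-1) ^ j * v ^ j.choose 2 * qPochhammer (-v) v j * qBinom (v ^ 2) n j

-- A WZ-style certificate: at `j = n`, `d = 0` the right side is
-- `-andrewsSummand v (n + 1) (n + 1)`.
lemma sum_range_andrewsSummand_telescope (v : A) : ∀ j d : ℕ,
    ∑ i ∈ range (j + 1),
        (andrewsSummand v (j + d + 1) i + v ^ (2 * (j + d) + 1) * andrewsSummand v (j + d) i) =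
      (v ^ j + v ^ (2 * (j + d) + 1)) * andrewsSummand v (j + d) j
  | 0, d => by simp [andrewsSummand]
  | j + 1, d => by
    have ih := sum_range_andrewsSummand_telescope v j (d + 1)
    rw [← add_assoc] at ih
    have h₁ := qBinom_succ_succ (v ^ 2) (j + d + 1) j
    have h₂ := qBinom_succ_succ' (v ^ 2) j (d + 1)
    rw [← add_assoc] at h₂
    rw [add_right_comm j 1 d, sum_range_succ, ih]
    simp only [andrewsSummand, qPochhammer_succ, choose_two_succ]
    linear_combination
      -(-1) ^ j * v ^ j.choose 2 * qPochhammer (-v) v j * v ^ j * (h₁ + v ^ (j + 1) * h₂)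

theorem sum_range_andrewsSummand (v : A) : ∀ n : ℕ,
    ∑ j ∈ range (n + 1), andrewsSummand v n j = (-1) ^ n * v ^ (n ^ 2)
  | 0 => by simp [andrewsSummand]
  | n + 1 => by
    have h := sum_range_andrewsSummand_telescope v n 0
    rw [add_zero, sum_add_distrib, ← mul_sum, sum_range_andrewsSummand v n] at h
    rw [sum_range_succ]
    simp only [andrewsSummand, qPochhammer_succ, choose_two_succ, qBinom_self] at h ⊢
    linear_combination h

theorem andrews_coeff_succ (v : A) (n : ℕ) :
    ∑ j ∈ range (n + 1), (-1) ^ (j + 1) * (v ^ (j + 2).choose 2 * qPochhammer (-v) v j) *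
        ((v ^ 2) ^ (n - j) * qBinom (v ^ 2) n j) =
      (-1) ^ (n + 1) * v ^ ((n + 1) ^ 2) := by
  have h : ∀ j ∈ range (n + 1), (-1) ^ (j + 1) * (v ^ (j + 2).choose 2 * qPochhammer (-v) v j) *
      ((v ^ 2) ^ (n - j) * qBinom (v ^ 2) n j) = -v ^ (2 * n + 1) * andrewsSummand v n j := by
    intro j hj
    obtain ⟨d, rfl⟩ := Nat.exists_eq_add_of_le (Nat.lt_succ_iff.mp (mem_range.mp hj))
    rw [Nat.add_sub_cancel_left, andrewsSummand, choose_two_succ, choose_two_succ]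
    ring
  rw [sum_congr rfl h, ← mul_sum, sum_range_andrewsSummand]
  ring

end QBinom

section PowerSeries

variable {R : Type*} [CommRing R]

lemma qPochhammer_C_mul_X_mul_mk_qBinom (c p : R) : ∀ m : ℕ,
    qPochhammer (C c * X) (C p) (m + 1) * PowerSeries.mk (fun t => c ^ t * qBinom p (m + t) m) = 1
  | 0 => by
    ext t
    rcases t with _ | t
    · simp [qPochhammer]
    · simp only [qPochhammer, range_one, prod_singleton, pow_zero, mul_one, zero_add,
        qBinom_zero_right, sub_mul, one_mul, mul_assoc, map_sub, coeff_mk, coeff_C_mul,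
        coeff_succ_X_mul, coeff_one, t.succ_ne_zero, if_false]
      ring
  | m + 1 => by
    have key : (1 - C c * X * C p ^ (m + 1) : R⟦X⟧) *
        PowerSeries.mk (fun t => c ^ t * qBinom p (m + 1 + t) (m + 1)) =
          PowerSeries.mk (fun t => c ^ t * qBinom p (m + t) m) := by
      ext t
      rcases t with _ | t
      · simp
      · have h := qBinom_succ_succ p (m + t + 1) m
        simp only [← map_pow, mul_assoc, sub_mul, one_mul, map_sub, coeff_mk, coeff_C_mul,
          coeff_succ_X_mul]
        rw [show m + 1 + (t + 1) = m + t + 1 + 1 by omega, show m + 1 + t = m + t + 1 by omega,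
          show m + (t + 1) = m + t + 1 by omega]
        linear_combination c ^ (t + 1) * h
    rw [qPochhammer_succ, mul_assoc, key, qPochhammer_C_mul_X_mul_mk_qBinom c p m]

lemma coeff_sum_neg_X_pow_mul_C_mul (e : ℕ) (f : ℕ → R) (S : ℕ → R⟦X⟧) :
    coeff e (∑ m ∈ range (e + 1), (-X) ^ m * C (f m) * S m) =
      ∑ m ∈ range (e + 1), (-1) ^ m * f m * coeff (e - m) (S m) := by
  rw [map_sum]
  refine sum_congr rfl fun m hm => ?_
  have h : (-X) ^ m * C (f m) * S m = C ((-1) ^ m * f m) * (X ^ m * S m) := by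
    rw [neg_pow, map_mul, map_pow, map_neg, map_one]
    ring
  rw [h, coeff_C_mul, coeff_X_pow_mul', if_pos (by simpa [Nat.lt_succ_iff] using hm)]

lemma coeff_sum_neg_X_pow_mul_C (e : ℕ) (f : ℕ → R) :
    coeff e (∑ m ∈ range (e + 1), (-X) ^ m * C (f m)) = (-1) ^ e * f e := by
  have h : ∀ m, (-X) ^ m * C (f m) = C ((-1) ^ m * f m) * X ^ m := fun m => by
    rw [neg_pow, map_mul, map_pow, map_neg, map_one]
    ring
  simp only [h, map_sum, coeff_C_mul_X_pow, sum_ite_eq, mem_range, Nat.lt_succ_self, if_true]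

end PowerSeries

lemma qPoch_eq_qPochhammer (a : ℤ⟦X⟧) (n : ℕ) : qPoch a n = qPochhammer a X n := rfl

lemma isUnit_qPoch_X (n : ℕ) : IsUnit (qPoch X n) := by
  simp [PowerSeries.isUnit_iff_constantCoeff, qPoch]

lemma gaussBinom_eq_qBinom (m r : ℕ) : gaussBinom m r = qBinom X m r := by
  rcases le_or_gt r m with h | h
  · obtain ⟨d, rfl⟩ := Nat.exists_eq_add_of_le h
    have hu : IsUnit (qPoch X r * qPoch X d) := (isUnit_qPoch_X r).mul (isUnit_qPoch_X d)
    rw [gaussBinom, if_pos h, Nat.add_sub_cancel_left]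
    simp only [qPoch_eq_qPochhammer] at hu ⊢
    rw [← qBinom_mul_qPochhammer_mul_qPochhammer, mul_assoc (qBinom _ _ _),
      Ring.mul_inverse_cancel_right _ _ hu]
  · rw [gaussBinom, if_neg h.not_ge, qBinom_eq_zero_of_lt X h]

lemma pochA_eq_qPochhammer (m : ℕ) : pochA m = qPochhammer (C (X ^ 2) * X) (C (X ^ 2)) m := by
  refine prod_congr rfl fun j _ => ?_
  rw [mul_comm (C _) X, mul_assoc, ← map_pow, ← map_mul, ← pow_succ', ← pow_mul]
  ring_nf

lemma coeff_inverse_pochA_succ (m t : ℕ) :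
    coeff t (Ring.inverse (pochA (m + 1))) = (X ^ 2) ^ t * qBinom (X ^ 2) (m + t) m := by
  have h := qPochhammer_C_mul_X_mul_mk_qBinom (X ^ 2 : ℤ⟦X⟧) (X ^ 2) m
  rw [← pochA_eq_qPochhammer] at h
  have hinv := (Ring.inverse_mul_eq_iff_eq_mul _ 1 _ (IsUnit.of_mul_eq_one _ h)).mpr h.symm
  rw [mul_one] at hinv
  rw [hinv, coeff_mk]

/-- Andrews' identity with parameter `a` (Theorem, eq. (1.6)):
`∑_{m,k≥0} (-a)^m q^{(m-k)^2+k^2+k}/(aq^2;q^2)_m · [m choose 2k]_q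
  = ∑_{n≥0} (-a)^n q^{n^2}` in `ℤ[[a,q]]`, where `[m choose 2k]_q = 0` if `2k > m`.
Stated coefficientwise in `a`: the `(m,k)` summand has `a`-order at least `m`,
so the coefficient of `a^e` involves only `m ≤ e`. -/
theorem andrews_q10_param :
    ∀ e : ℕ,
      PowerSeries.coeff (R := PowerSeries ℤ) e
        (∑ m ∈ Finset.range (e + 1), ∑ k ∈ Finset.range (e + 1),
          if 2 * k ≤ m then
            (-(PowerSeries.X : Aq)) ^ m *
              PowerSeries.C (R := PowerSeries ℤ)
                (PowerSeries.X ^ ((m - k) ^ 2 + k ^ 2 + k) * gaussBinom m (2 * k)) *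
              Ring.inverse (pochA m)
          else 0)
      =
      PowerSeries.coeff (R := PowerSeries ℤ) e
        (∑ n ∈ Finset.range (e + 1),
          (-(PowerSeries.X : Aq)) ^ n * PowerSeries.C (R := PowerSeries ℤ) (PowerSeries.X ^ (n ^ 2))) := by
  intro e
  have hterm : ∀ m k : ℕ, (if 2 * k ≤ m then (-X : Aq) ^ m *
        C (X ^ ((m - k) ^ 2 + k ^ 2 + k) * gaussBinom m (2 * k)) * Ring.inverse (pochA m) else 0) =
      (-X : Aq) ^ m * C (X ^ ((m - k) ^ 2 + k ^ 2 + k) * qBinom X m (2 * k)) *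
        Ring.inverse (pochA m) := by
    intro m k
    split_ifs with h
    · rw [gaussBinom_eq_qBinom]
    · rw [qBinom_eq_zero_of_lt X (by omega), mul_zero, map_zero, mul_zero, zero_mul]
  simp only [hterm, ← sum_mul, ← mul_sum, ← map_sum]
  rw [coeff_sum_neg_X_pow_mul_C_mul, coeff_sum_neg_X_pow_mul_C]
  rcases e with _ | n
  · simp [pochA]
  · rw [sum_range_succ', ← andrews_coeff_succ]
    rw [show pochA 0 = 1 from prod_range_zero _, Ring.inverse_one, Nat.sub_zero, coeff_one,
      if_neg n.succ_ne_zero, mul_zero, add_zero]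
    have h2 : (2 : ℤ⟦X⟧) ≠ 0 := fun h => by simpa [map_ofNat] using congrArg (coeff 0) h
    refine sum_congr rfl fun j hj => ?_
    rw [mem_range] at hj
    rw [sum_pow_mul_qBinom_two_mul X h2 (by omega), Nat.add_sub_add_right,
      coeff_inverse_pochA_succ, Nat.add_sub_cancel' (by omega)]
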